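/- Let K^[j]_i(θ) be linear maps on ℂ^D, differentiable in θ, and ψ ∈ ℂ^D a unit vector such that K^[j]_i(θ0) ψ = c^[j]_i ψ with c^[j]_i ∈ ℂ \ {0} for all i, j. Then for any outcome string (i_1,…,i_n), (d/dθ) ‖K^[n]_{i_n}(θ)···K^[1]_{i_1}(θ) ψ‖² |_{θ0} = |c^[1]_{i_1}···c^[n]_{i_n}|² · 2 Re Σ_{j=1}^n ⟨ψ| K^[n]_{i_n}···K^[j+1]_{i_{j+1}} K̇^[j]_{i_j} |ψ⟩ / (c^[j]_{i_j} c^[j+1]_{i_{j+1}} ··· c^[n]_{i_n}), where K^[j]_i = K^[j]_i(θ0) and K̇^[j]_i = (d/dθ)K^[j]_i(θ)|_{θ0}. -/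

import Mathlib

/-! At `θ0` every factor of the ordered product maps `ψ` to a multiple of itself, so the product
maps `ψ` to `(∏ c) • ψ`. The Leibniz rule writes the derivative of the product as a sum over the
position `j` of the differentiated factor, and the factors to the right of `j` contribute the
scalar `∏_{l<j} c_l`. Differentiating `‖v‖² = ⟨v, v⟩` gives `2 Re ⟨(∏ c) ψ, v'⟩`, and
`conj (∏ c) · ∏_{l<j} c_l = |∏ c|² / ∏_{l≥j} c_l`. -/

open scoped BigOperators Matrix ComplexConjugate Classical
open Matrix

noncomputable section

/-- Inner product on `ι → ℂ`, conjugate-linear in the first argument. -/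
def inn {ι : Type*} [Fintype ι] (v w : ι → ℂ) : ℂ := ∑ i, conj (v i) * w i

/-- Squared norm on `ι → ℂ`. -/
def nsq {ι : Type*} [Fintype ι] (v : ι → ℂ) : ℝ := ∑ i, Complex.normSq (v i)

/-- `A (n-1) ⋯ A 1 A 0`. -/
def kprodFin {α : Type*} [Fintype α] [DecidableEq α] {n : ℕ} (A : Fin n → Matrix α α ℂ) :
    Matrix α α ℂ :=
  ((List.ofFn A).reverse).prod

/-- `A (n-1) ⋯ A j`. -/
def kprodFrom {α : Type*} [Fintype α] [DecidableEq α] {n : ℕ} (A : Fin n → Matrix α α ℂ)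
    (j : ℕ) : Matrix α α ℂ :=
  (((List.ofFn A).drop j).reverse).prod

open Finset

def kprodTo {α : Type*} [Fintype α] [DecidableEq α] {n : ℕ} (A : Fin n → Matrix α α ℂ)
    (j : ℕ) : Matrix α α ℂ :=
  (((List.ofFn A).take j).reverse).prod

/-- Leibniz-rule derivative of `kprodFin A`, where `A' j` is the derivative of the factor `A j`. -/
def kprodDeriv {α : Type*} [Fintype α] [DecidableEq α] {n : ℕ} (A A' : Fin n → Matrix α α ℂ) :
    Matrix α α ℂ :=
  ∑ j : Fin n, kprodFrom A ((j : ℕ) + 1) * A' j * kprodTo A j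

section OrderedProducts

variable {α : Type*} [Fintype α] [DecidableEq α]

lemma kprodFin_zero (A : Fin 0 → Matrix α α ℂ) : kprodFin A = 1 := by
  simp [kprodFin]

lemma kprodFin_succ {n : ℕ} (A : Fin (n + 1) → Matrix α α ℂ) :
    kprodFin A = kprodFin (A ∘ Fin.succ) * A 0 := by
  simp [kprodFin, List.ofFn_succ, Function.comp_def]

lemma kprodFrom_zero {n : ℕ} (A : Fin n → Matrix α α ℂ) : kprodFrom A 0 = kprodFin A := by
  simp [kprodFrom, kprodFin]

lemma kprodFrom_succ {n : ℕ} (A : Fin (n + 1) → Matrix α α ℂ) (j : ℕ) :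
    kprodFrom A (j + 1) = kprodFrom (A ∘ Fin.succ) j := by
  simp [kprodFrom, List.ofFn_succ, Function.comp_def]

lemma kprodTo_zero {n : ℕ} (A : Fin n → Matrix α α ℂ) : kprodTo A 0 = 1 := by
  simp [kprodTo]

lemma kprodTo_succ {n : ℕ} (A : Fin (n + 1) → Matrix α α ℂ) (j : ℕ) :
    kprodTo A (j + 1) = kprodTo (A ∘ Fin.succ) j * A 0 := by
  simp [kprodTo, List.ofFn_succ, Function.comp_def]

lemma kprodDeriv_zero (A A' : Fin 0 → Matrix α α ℂ) : kprodDeriv A A' = 0 := by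
  simp [kprodDeriv]

lemma kprodDeriv_succ {n : ℕ} (A A' : Fin (n + 1) → Matrix α α ℂ) :
    kprodDeriv A A' =
      kprodDeriv (A ∘ Fin.succ) (A' ∘ Fin.succ) * A 0 + kprodFin (A ∘ Fin.succ) * A' 0 := by
  simp [kprodDeriv, Fin.sum_univ_succ, kprodFrom_succ, kprodFrom_zero, kprodTo_succ,
    kprodTo_zero, Finset.sum_mul, mul_assoc, add_comm]

lemma list_prod_map_mulVec {R ι : Type*} [CommSemiring R] (L : List ι) (f : ι → Matrix α α R)
    (c : ι → R) (ψ : α → R) (hf : ∀ i, f i *ᵥ ψ = c i • ψ) : (L.map f).prod *ᵥ ψ = (L.map c).prod • ψ := by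
  induction L with
  | nil => simp
  | cons i L ih => simp [← mulVec_mulVec, ih, hf, mulVec_smul, smul_smul, mul_comm]

variable {n : ℕ} {A : Fin n → Matrix α α ℂ} {c : Fin n → ℂ} {ψ : α → ℂ}

lemma kprodFin_mulVec (hA : ∀ j, A j *ᵥ ψ = c j • ψ) : kprodFin A *ᵥ ψ = (∏ j, c j) • ψ := by
  rw [kprodFin, List.ofFn_eq_map, ← List.map_reverse, list_prod_map_mulVec _ A c ψ hA,
    List.map_reverse, List.prod_reverse, ← List.ofFn_eq_map, List.prod_ofFn]

lemma kprodTo_mulVec (hA : ∀ j, A j *ᵥ ψ = c j • ψ) (j : Fin n) :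
    kprodTo A j *ᵥ ψ = (∏ l ∈ Iio j, c l) • ψ := by
  rw [kprodTo, List.ofFn_eq_map, ← List.map_take, ← List.map_reverse,
    list_prod_map_mulVec _ A c ψ hA, List.map_reverse, List.prod_reverse, List.map_take,
    ← List.ofFn_eq_map, List.prod_take_ofFn]
  congr 2
  ext l
  simp

lemma kprodDeriv_mulVec (A' : Fin n → Matrix α α ℂ) (hA : ∀ j, A j *ᵥ ψ = c j • ψ) :
    kprodDeriv A A' *ᵥ ψ =
      ∑ j, (∏ l ∈ Iio j, c l) • ((kprodFrom A ((j : ℕ) + 1) * A' j) *ᵥ ψ) := by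
  simp [kprodDeriv, sum_mulVec, ← mulVec_mulVec, kprodTo_mulVec hA, mulVec_smul]

end OrderedProducts

section Derivatives

variable {𝕜 : Type*} [NontriviallyNormedField 𝕜] {x : 𝕜}

lemma hasDerivAt_mul_apply {𝔸 : Type*} [NormedRing 𝔸] [NormedAlgebra 𝕜 𝔸]
    {l m n : Type*} [Fintype m] {M : 𝕜 → Matrix l m 𝔸} {N : 𝕜 → Matrix m n 𝔸}
    {M' : Matrix l m 𝔸} {N' : Matrix m n 𝔸}
    (hM : ∀ s t, HasDerivAt (fun θ => M θ s t) (M' s t) x)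
    (hN : ∀ s t, HasDerivAt (fun θ => N θ s t) (N' s t) x) (s : l) (t : n) :
    HasDerivAt (fun θ => (M θ * N θ) s t) ((M' * N x + M x * N') s t) x := by
  simp only [mul_apply, Matrix.add_apply]
  rw [← sum_add_distrib]
  exact HasDerivAt.fun_sum fun u _ => (hM s u).mul (hN u t)

lemma hasDerivAt_mulVec_apply {𝔸 : Type*} [NormedRing 𝔸] [NormedAlgebra 𝕜 𝔸]
    {l m : Type*} [Fintype m] {M : 𝕜 → Matrix l m 𝔸} {M' : Matrix l m 𝔸}
    (hM : ∀ s t, HasDerivAt (fun θ => M θ s t) (M' s t) x) (v : m → 𝔸) (s : l) :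
    HasDerivAt (fun θ => (M θ *ᵥ v) s) ((M' *ᵥ v) s) x := by
  simp only [mulVec, dotProduct]
  exact HasDerivAt.fun_sum fun t _ => (hM s t).mul_const (v t)

lemma hasDerivAt_kprodFin_apply [NormedAlgebra 𝕜 ℂ] {α : Type*} [Fintype α] [DecidableEq α] :
    ∀ {n : ℕ} {A : Fin n → 𝕜 → Matrix α α ℂ} {A' : Fin n → Matrix α α ℂ},
    (∀ j s t, HasDerivAt (fun θ => A j θ s t) (A' j s t) x) →
    ∀ s t, HasDerivAt (fun θ => kprodFin (fun j => A j θ) s t)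
      (kprodDeriv (fun j => A j x) A' s t) x
  | 0, A, A', _, s, t => by
    simpa [kprodFin_zero, kprodDeriv_zero] using hasDerivAt_const x ((1 : Matrix α α ℂ) s t)
  | n + 1, A, A', hA, s, t => by
    simp only [kprodFin_succ, kprodDeriv_succ]
    exact hasDerivAt_mul_apply (hasDerivAt_kprodFin_apply fun j => hA j.succ) (hA 0) s t

end Derivatives

section InnerProduct

variable {ι : Type*} [Fintype ι]

lemma inn_smul_left (a : ℂ) (v w : ι → ℂ) : inn (a • v) w = conj a * inn v w := by
  simp [inn, mul_sum, mul_assoc]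

lemma inn_smul_right (a : ℂ) (v w : ι → ℂ) : inn v (a • w) = a * inn v w := by
  simp only [inn, Pi.smul_apply, smul_eq_mul, mul_sum]
  exact sum_congr rfl fun i _ => by ring

lemma inn_sum_right {β : Type*} (v : ι → ℂ) (s : Finset β) (w : β → ι → ℂ) :
    inn v (∑ b ∈ s, w b) = ∑ b ∈ s, inn v (w b) := by
  simp only [inn, Finset.sum_apply, mul_sum]
  exact sum_comm

lemma conj_inn (v w : ι → ℂ) : conj (inn v w) = inn w v := by
  simp [inn, mul_comm]

lemma nsq_eq_re_inn (v : ι → ℂ) : nsq v = (inn v v).re := by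
  simp [nsq, inn, Complex.re_sum, Complex.normSq_apply, Complex.mul_re]

lemma hasDerivAt_inn {x : ℝ} {v w : ℝ → ι → ℂ} {v' w' : ι → ℂ}
    (hv : ∀ s, HasDerivAt (fun θ => v θ s) (v' s) x)
    (hw : ∀ s, HasDerivAt (fun θ => w θ s) (w' s) x) :
    HasDerivAt (fun θ => inn (v θ) (w θ)) (inn v' (w x) + inn (v x) w') x := by
  simp only [inn, ← sum_add_distrib]
  exact HasDerivAt.fun_sum fun s _ => (hv s).star.mul (hw s)

lemma hasDerivAt_nsq {x : ℝ} {v : ℝ → ι → ℂ} {v' : ι → ℂ}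
    (hv : ∀ s, HasDerivAt (fun θ => v θ s) (v' s) x) :
    HasDerivAt (fun θ => nsq (v θ)) (2 * (inn (v x) v').re) x := by
  have h := Complex.reCLM.hasFDerivAt.comp_hasDerivAt x (hasDerivAt_inn hv hv)
  simp only [Function.comp_def, Complex.reCLM_apply, ← nsq_eq_re_inn] at h
  refine h.congr_deriv ?_
  rw [Complex.add_re, ← conj_inn, Complex.conj_re]
  ring

end InnerProduct

lemma conj_prod_mul_prod_Iio {n : ℕ} (c : Fin n → ℂ) (j : Fin n) :
    conj (∏ l, c l) * ∏ l ∈ Iio j, c l = Complex.normSq (∏ l, c l) / ∏ l ∈ Ici j, c l := by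
  have hcompl : (Iio j)ᶜ = Ici j := by ext; simp
  rw [← prod_mul_prod_compl (Iio j), hcompl]
  rcases eq_or_ne (∏ l ∈ Ici j, c l) 0 with h | h
  · simp [h] -- both sides vanish, the right one because `x / 0 = 0`
  · rw [Complex.normSq_eq_conj_mul_self]
    field_simp

theorem likelihood_derivative_formula_general
    (D n : ℕ) {ι : Type*} [Fintype ι] (θ0 : ℝ)
    (K : ℕ → ι → ℝ → Matrix (Fin D) (Fin D) ℂ)
    (Kd : ℕ → ι → Matrix (Fin D) (Fin D) ℂ)
    (hKd : ∀ j i s t, HasDerivAt (fun θ => K j i θ s t) (Kd j i s t) θ0)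
    (ψ : Fin D → ℂ)
    (c : ℕ → ι → ℂ)
    (hKψ : ∀ j i, (K j i θ0).mulVec ψ = c j i • ψ)
    (g : Fin n → ι) :
    HasDerivAt
      (fun θ => nsq ((kprodFin fun j : Fin n => K (j : ℕ) (g j) θ).mulVec ψ))
      ((∏ j : Fin n, Complex.normSq (c (j : ℕ) (g j))) *
        (2 * (∑ j : Fin n,
          inn ψ (((kprodFrom (fun l : Fin n => K (l : ℕ) (g l) θ0) ((j : ℕ) + 1)
                    * Kd (j : ℕ) (g j)).mulVec ψ))
            / ∏ l ∈ Finset.Ici j, c (l : ℕ) (g l)).re))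
      θ0 := by
  have hA : ∀ j : Fin n, K j (g j) θ0 *ᵥ ψ = c j (g j) • ψ := fun j => hKψ j (g j)
  refine (hasDerivAt_nsq <| hasDerivAt_mulVec_apply
    (hasDerivAt_kprodFin_apply fun j : Fin n => hKd j (g j)) ψ).congr_deriv ?_
  rw [kprodFin_mulVec hA, kprodDeriv_mulVec _ hA, inn_smul_left, inn_sum_right, mul_sum]
  simp only [inn_smul_right, ← mul_assoc, conj_prod_mul_prod_Iio, div_mul_eq_mul_div,
    mul_div_assoc, ← mul_sum, ← map_prod, Complex.re_ofReal_mul]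
  ring

/-- derivative of the output likelihood under stationarity. If
`K^[j]_i(θ0) ψ = c^[j]_i ψ` with `c^[j]_i ≠ 0`, then for any outcome string,
`(d/dθ)‖K^[n]_{iₙ}(θ)⋯K^[1]_{i₁}(θ)ψ‖²|_{θ0}
  = |c_{i₁}⋯c_{iₙ}|² · 2Re ∑ⱼ ⟨ψ|K_{iₙ}⋯K_{i_{j+1}} K̇_{i_j}|ψ⟩/(c_{i_j}⋯c_{iₙ})`. -/
theorem likelihood_derivative_formula
    (D n : ℕ) {ι : Type*} [Fintype ι] (θ0 : ℝ)
    (K : ℕ → ι → ℝ → Matrix (Fin D) (Fin D) ℂ)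
    (Kd : ℕ → ι → Matrix (Fin D) (Fin D) ℂ)
    (hKd : ∀ j i s t, HasDerivAt (fun θ => K j i θ s t) (Kd j i s t) θ0)
    (ψ : Fin D → ℂ) (hψ : nsq ψ = 1)
    (c : ℕ → ι → ℂ) (hc0 : ∀ j i, c j i ≠ 0)
    (hKψ : ∀ j i, (K j i θ0).mulVec ψ = c j i • ψ)
    (g : Fin n → ι) :
    HasDerivAt
      (fun θ => nsq ((kprodFin fun j : Fin n => K (j : ℕ) (g j) θ).mulVec ψ))
      ((∏ j : Fin n, Complex.normSq (c (j : ℕ) (g j))) *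
        (2 * (∑ j : Fin n,
          inn ψ (((kprodFrom (fun l : Fin n => K (l : ℕ) (g l) θ0) ((j : ℕ) + 1)
                    * Kd (j : ℕ) (g j)).mulVec ψ))
            / ∏ l ∈ Finset.Ici j, c (l : ℕ) (g l)).re))
      θ0 :=
  likelihood_derivative_formula_general D n θ0 K Kd hKd ψ c hKψ g
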